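/- Let T > 0 and let f : ℝ^d → ℝ^d be globally Lipschitz with constant L > 0 (autonomous case). For every compact set K ⊆ ℝ^d and every ε > 0 there exist P ∈ ℕ₊ and parameters (W_i, A_i, B_i) ∈ ℝ^d × ℝ^{d×d} × ℝ^d, i = 1,…,P, such that for every z₀ ∈ K, the solution z of ż(t) = f(z(t)), z(0) = z₀, and the solution x of the autonomous neural ODE ẋ(t) = Σ_{i=1}^P W_i ∘ Σ(A_i x(t) + B_i), x(0) = z₀, satisfy sup_{t ∈ [0,T]} ‖z(t) − x(t)‖ ≤ ε. -/

import Mathlib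

/-!
Stone–Weierstrass makes finite sums of exponentials `y ↦ exp ⟪a, y⟫` dense among continuous
functions on a compact set, and on a bounded interval `exp` is uniformly close to its left
Riemann sums, which are ReLU networks of one variable. Hence the ridge networks
`y ↦ ∑ cᵢ max (⟪aᵢ, y⟫ + bᵢ) 0`, and coordinatewise the autonomous network fields, approximate
the Lipschitz field `f` uniformly on a large ball. By Grönwall the network trajectory stays
`ε`-close to the true one as long as it stays in that ball; the true trajectory stays in a
smaller ball by the a priori Grönwall bound, so the network trajectory never gets to leave.
-/

open MeasureTheory Set

noncomputable section

/-- `n`-dimensional Euclidean space. -/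
abbrev Euc (n : ℕ) := EuclideanSpace ℝ (Fin n)

/-- The autonomous neural ODE vector field `x ↦ Σ_{i=1}^P W_i ∘ ReLU(A_i x + B_i)`. -/
def autoNode {d P : ℕ} (W : Fin P → Euc d) (A : Fin P → Matrix (Fin d) (Fin d) ℝ)
    (B : Fin P → Euc d) (x : Euc d) : Euc d :=
  WithLp.toLp 2 (fun j => ∑ i, W i j * max (Matrix.mulVec (A i) x j + B i j) 0)

open Real
open scoped InnerProductSpace NNReal Topology

lemma max_sub_zero_eq_sub_min (s t : ℝ) : max (s - t) 0 = s - min s t := by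
  rw [← max_sub_sub_left, sub_self, max_comm]

lemma mul_sub_le_exp_sub_exp (u v : ℝ) : exp u * (v - u) ≤ exp v - exp u := by
  have := mul_le_mul_of_nonneg_left (add_one_le_exp (v - u)) (exp_pos u).le
  rw [← exp_add, add_sub_cancel] at this
  linarith

lemma exp_min_sub_exp_min_bounds {t t' : ℝ} (htt' : t ≤ t') (s : ℝ) :
    0 ≤ exp (min s t') - exp (min s t) - exp t * (min s t' - min s t) ∧
      exp (min s t') - exp (min s t) - exp t * (min s t' - min s t) ≤
        (exp t' - exp t) * (t' - t) := by
  have hexp : 0 ≤ (exp t' - exp t) * (t' - t) :=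
    mul_nonneg (sub_nonneg.2 (exp_le_exp.2 htt')) (sub_nonneg.2 htt')
  rcases le_total s t with hst | hts
  · simpa [min_eq_left hst, min_eq_left (hst.trans htt')] using hexp
  set v := min s t'
  have hv : t ≤ v := le_min hts htt'
  have hvt' : v ≤ t' := min_le_right s t'
  rw [min_eq_right hts]
  refine ⟨by linarith [mul_sub_le_exp_sub_exp t v], ?_⟩
  calc exp v - exp t - exp t * (v - t) ≤ (exp v - exp t) * (v - t) := by
        linarith [mul_sub_le_exp_sub_exp v t]
    _ ≤ (exp t' - exp t) * (t' - t) :=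
      mul_le_mul (by linarith [exp_le_exp.2 hvt']) (by linarith) (by linarith)
        (sub_nonneg.2 (exp_le_exp.2 htt'))

theorem abs_exp_sub_riemannSum_le {t : ℕ → ℝ} (ht : Monotone t) {m : ℝ}
    (hm : ∀ k, t (k + 1) - t k ≤ m) {N : ℕ} {s : ℝ} (hs : s ∈ Icc (t 0) (t N)) :
    |exp s - (exp (t 0) +
        ∑ k ∈ Finset.range N, exp (t k) * (min s (t (k + 1)) - min s (t k)))| ≤
      m * (exp (t N) - exp (t 0)) := by
  have hbounds := fun k : ℕ => exp_min_sub_exp_min_bounds (ht k.le_succ) s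
  have htel : exp s - exp (t 0) =
      ∑ k ∈ Finset.range N, (exp (min s (t (k + 1))) - exp (min s (t k))) := by
    rw [Finset.sum_range_sub (fun k => exp (min s (t k))), min_eq_left hs.2, min_eq_right hs.1]
  rw [← sub_sub, htel, ← Finset.sum_sub_distrib,
    abs_of_nonneg (Finset.sum_nonneg fun k _ => (hbounds k).1)]
  calc _ ≤ ∑ k ∈ Finset.range N, (exp (t (k + 1)) - exp (t k)) * m :=
        Finset.sum_le_sum fun k _ => (hbounds k).2.trans <|
          mul_le_mul_of_nonneg_left (hm k) (sub_nonneg.2 (exp_le_exp.2 (ht k.le_succ)))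
    _ = m * (exp (t N) - exp (t 0)) := by
      rw [← Finset.sum_mul, Finset.sum_range_sub (fun k => exp (t k)), mul_comm]

/-- Rewriting `min s t' - min s t` as `max (s - t) 0 - max (s - t') 0` turns the left Riemann
sums of `∫ exp` into one-variable ReLU networks. -/
theorem exists_reluSum_near_exp {R : ℝ} (hR : 0 ≤ R) {δ : ℝ} (hδ : 0 < δ) :
    ∃ (N : ℕ) (t : ℕ → ℝ), ∀ s ∈ Icc (-R) R,
      |exp s - (exp (t 0) +
          ∑ k ∈ Finset.range N, exp (t k) * (max (s - t k) 0 - max (s - t (k + 1)) 0))| < δ := by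
  obtain ⟨N, hN⟩ := exists_nat_gt (2 * R * exp R / δ)
  have hNpos : (0 : ℝ) < N := lt_of_le_of_lt (by positivity) hN
  set m := 2 * R / N
  have hm : 0 ≤ m := by positivity
  have hNm : N * m = 2 * R := mul_div_cancel₀ _ hNpos.ne'
  refine ⟨N, fun k => -R + k * m, fun s hs => ?_⟩
  have hgrid := abs_exp_sub_riemannSum_le (t := fun k => -R + k * m) (m := m) (N := N) (s := s)
    (fun a b hab => by dsimp only; gcongr) (fun k => by push_cast; linarith)
    (by simp only [Nat.cast_zero, zero_mul, add_zero, hNm]; constructor <;> linarith [hs.1, hs.2])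
  simp only [max_sub_zero_eq_sub_min, sub_sub_sub_cancel_left]
  refine hgrid.trans_lt ?_
  calc m * (exp (-R + N * m) - exp (-R + (0 : ℕ) * m)) ≤ m * exp R := by
        rw [hNm, Nat.cast_zero, zero_mul, add_zero]
        exact mul_le_mul_of_nonneg_left (by ring_nf; linarith [exp_pos (-R)]) hm
    _ < δ := by
      rw [div_lt_iff₀ hδ] at hN
      rw [div_mul_eq_mul_div, div_lt_iff₀ hNpos]
      linarith

section RidgeNetworks

variable {E : Type*} [NormedAddCommGroup E] [InnerProductSpace ℝ E]

def reluRidge (a : E) (b : ℝ) : C(E, ℝ) := ⟨fun y => max (⟪a, y⟫_ℝ + b) 0, by fun_prop⟩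

variable (E) in
def reluNetworks : Submodule ℝ C(E, ℝ) := Submodule.span ℝ (range (Function.uncurry reluRidge))

@[simps]
def ContinuousMap.restrictₗ {X : Type*} [TopologicalSpace X] (s : Set X) :
    C(X, ℝ) →ₗ[ℝ] C(s, ℝ) where
  toFun g := g.restrict s
  map_add' _ _ := rfl
  map_smul' _ _ := rfl

variable (C : Set E)

/-- Being multiplicative, its range is a submonoid, so the algebra it generates is its span. -/
def expRidge : Multiplicative E →* C(C, ℝ) where
  toFun a := ⟨fun y => exp ⟪a.toAdd, (y : E)⟫_ℝ, by fun_prop⟩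
  map_one' := by ext; simp
  map_mul' a b := by ext; simp [inner_add_left, exp_add]

theorem expRidge_mem_topologicalClosure [CompactSpace C] (a : Multiplicative E) :
    expRidge C a ∈ ((reluNetworks E).map (ContinuousMap.restrictₗ C)).topologicalClosure := by
  rw [← SetLike.mem_coe, Submodule.topologicalClosure_coe, Metric.mem_closure_iff]
  intro ε hε
  set ℓ : C(C, ℝ) := ⟨fun y => ⟪a.toAdd, (y : E)⟫_ℝ, by fun_prop⟩
  obtain ⟨N, t, ht⟩ := exists_reluSum_near_exp (norm_nonneg ℓ) hε
  refine ⟨ContinuousMap.restrictₗ C (exp (t 0) • reluRidge 0 1 + ∑ k ∈ Finset.range N,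
    exp (t k) • (reluRidge a.toAdd (-t k) - reluRidge a.toAdd (-t (k + 1)))), ⟨_, ?_, rfl⟩, ?_⟩
  · have hmem : ∀ a b, reluRidge a b ∈ reluNetworks E := fun a b =>
      Submodule.subset_span ⟨(a, b), rfl⟩
    exact add_mem (Submodule.smul_mem _ _ (hmem _ _)) <|
      sum_mem fun k _ => Submodule.smul_mem _ _ (sub_mem (hmem _ _) (hmem _ _))
  · rw [ContinuousMap.dist_lt_iff hε]
    intro y
    have hy := abs_le.1 ((Real.norm_eq_abs _).symm.trans_le (ℓ.norm_coe_le_norm y))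
    simpa [expRidge, reluRidge, Real.dist_eq, sub_eq_add_neg, mul_add]
      using ht ⟪a.toAdd, (y : E)⟫_ℝ ⟨hy.1, hy.2⟩

theorem dense_reluNetworks_restrict [CompactSpace C] :
    Dense ((reluNetworks E).map (ContinuousMap.restrictₗ C) : Set C(C, ℝ)) := by
  have hsep : (Algebra.adjoin ℝ (range (expRidge C))).SeparatesPoints := by
    intro x y hxy
    refine ⟨_, ⟨expRidge C (.ofAdd ((x : E) - y)), Algebra.subset_adjoin ⟨_, rfl⟩, rfl⟩, ?_⟩
    have hne : ⟪(x : E) - y, x⟫_ℝ - ⟪(x : E) - y, y⟫_ℝ ≠ 0 := by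
      rw [← inner_sub_right, real_inner_self_eq_norm_sq]
      exact pow_ne_zero _ (norm_ne_zero_iff.2 (sub_ne_zero.2 (Subtype.coe_ne_coe.2 hxy)))
    simpa [expRidge, sub_eq_zero] using hne
  have hspan : Subalgebra.toSubmodule (Algebra.adjoin ℝ (range (expRidge C))) ≤
      ((reluNetworks E).map (ContinuousMap.restrictₗ C)).topologicalClosure := by
    rw [← MonoidHom.coe_mrange, Algebra.adjoin_eq_span, Submonoid.closure_eq, Submodule.span_le,
      MonoidHom.coe_mrange]
    rintro _ ⟨a, rfl⟩
    exact expRidge_mem_topologicalClosure C a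
  have hdense : Dense (Algebra.adjoin ℝ (range (expRidge C)) : Set C(C, ℝ)) := by
    rw [dense_iff_closure_eq, ← Subalgebra.topologicalClosure_coe,
      ContinuousMap.subalgebra_topologicalClosure_eq_top_of_separatesPoints _ hsep]
    rfl
  rw [← dense_closure, ← Submodule.topologicalClosure_coe]
  exact hdense.mono hspan

theorem exists_mem_reluNetworks_near {C : Set E} (hC : IsCompact C) (g : C(E, ℝ)) {δ : ℝ}
    (hδ : 0 < δ) : ∃ h ∈ reluNetworks E, ∀ y ∈ C, |g y - h y| < δ := by
  have := isCompact_iff_compactSpace.1 hC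
  obtain ⟨_, ⟨h, hh, rfl⟩, hgh⟩ :=
    (dense_reluNetworks_restrict C).exists_dist_lt (ContinuousMap.restrictₗ C g) hδ
  exact ⟨h, hh, fun y hy => (ContinuousMap.dist_apply_le_dist ⟨y, hy⟩).trans_lt hgh⟩

end RidgeNetworks

section AutoNodeFields

variable {d : ℕ}

theorem autoNode_append {P Q : ℕ} (W : Fin P → Euc d) (A : Fin P → Matrix (Fin d) (Fin d) ℝ)
    (B : Fin P → Euc d) (W' : Fin Q → Euc d) (A' : Fin Q → Matrix (Fin d) (Fin d) ℝ)
    (B' : Fin Q → Euc d) (x : Euc d) :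
    autoNode (Fin.append W W') (Fin.append A A') (Fin.append B B') x =
      autoNode W A B x + autoNode W' A' B' x := by
  ext j
  simp [autoNode, Fin.sum_univ_add]

theorem autoNode_smul {P : ℕ} (c : ℝ) (W : Fin P → Euc d)
    (A : Fin P → Matrix (Fin d) (Fin d) ℝ) (B : Fin P → Euc d) (x : Euc d) :
    autoNode (c • W) A B x = c • autoNode W A B x := by
  ext j
  simp [autoNode, Finset.mul_sum, mul_assoc]

variable (d) in
def autoNodeFields : Submodule ℝ (Euc d → Euc d) where
  carrier := {F | ∃ (P : ℕ) (W : Fin P → Euc d) (A : Fin P → Matrix (Fin d) (Fin d) ℝ)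
    (B : Fin P → Euc d), autoNode W A B = F}
  add_mem' := by
    rintro _ _ ⟨P, W, A, B, rfl⟩ ⟨Q, W', A', B', rfl⟩
    exact ⟨P + Q, _, _, _, funext (autoNode_append W A B W' A' B')⟩
  zero_mem' := ⟨0, Fin.elim0, Fin.elim0, Fin.elim0, by ext; simp [autoNode]⟩
  smul_mem' := by
    rintro c _ ⟨P, W, A, B, rfl⟩
    exact ⟨P, c • W, A, B, funext (autoNode_smul c W A B)⟩

theorem exists_pos_of_mem_autoNodeFields {F : Euc d → Euc d} (hF : F ∈ autoNodeFields d) :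
    ∃ P, 0 < P ∧ ∃ (W : Fin P → Euc d) (A : Fin P → Matrix (Fin d) (Fin d) ℝ)
      (B : Fin P → Euc d), autoNode W A B = F := by
  obtain ⟨P, W, A, B, rfl⟩ := hF
  exact ⟨P + 1, P.succ_pos, Fin.cons 0 W, Fin.cons 0 A, Fin.cons 0 B,
    by ext; simp [autoNode, Fin.sum_univ_succ]⟩

theorem reluRidge_smul_single_mem_autoNodeFields (a : Euc d) (b : ℝ) (j : Fin d) :
    (fun y => reluRidge a b y • EuclideanSpace.single j 1) ∈ autoNodeFields d := by
  refine ⟨1, fun _ => EuclideanSpace.single j 1, fun _ => Matrix.of fun _ k => a k,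
    fun _ => WithLp.toLp 2 fun _ => b, ?_⟩
  ext y i
  by_cases hij : i = j
  · subst hij
    simp [autoNode, reluRidge, Matrix.mulVec, dotProduct, PiLp.inner_apply, mul_comm]
  · simp [autoNode, hij]

theorem smul_single_mem_autoNodeFields {h : C(Euc d, ℝ)} (hh : h ∈ reluNetworks (Euc d))
    (j : Fin d) : (fun y => h y • EuclideanSpace.single j 1) ∈ autoNodeFields d := by
  induction hh using Submodule.span_induction with
  | mem _ hg =>
    obtain ⟨⟨a, b⟩, rfl⟩ := hg
    exact reluRidge_smul_single_mem_autoNodeFields a b j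
  | zero => convert (autoNodeFields d).zero_mem using 1; funext y; simp
  | add g g' _ _ hg hg' => convert add_mem hg hg' using 1; funext y; simp [add_smul]
  | smul c g _ hg => convert Submodule.smul_mem _ c hg using 1; funext y; simp [mul_smul]

theorem exists_autoNode_near {f : Euc d → Euc d} (hf : Continuous f) {C : Set (Euc d)}
    (hC : IsCompact C) {δ : ℝ} (hδ : 0 < δ) :
    ∃ P, 0 < P ∧ ∃ (W : Fin P → Euc d) (A : Fin P → Matrix (Fin d) (Fin d) ℝ)
      (B : Fin P → Euc d), ∀ y ∈ C, ‖f y - autoNode W A B y‖ < δ := by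
  have hδ' : 0 < δ / (d + 1) := by positivity
  choose h hh hfh using fun j : Fin d =>
    exists_mem_reluNetworks_near hC ⟨fun y => f y j, by fun_prop⟩ hδ'
  obtain ⟨P, hP, W, A, B, hWAB⟩ := exists_pos_of_mem_autoNodeFields
    (sum_mem (t := Finset.univ) fun j _ => smul_single_mem_autoNodeFields (hh j) j)
  refine ⟨P, hP, W, A, B, fun y hy => ?_⟩
  have hfy : f y = ∑ j, f y j • EuclideanSpace.single j 1 := by
    simpa using ((EuclideanSpace.basisFun (Fin d) ℝ).sum_repr (f y)).symm
  calc ‖f y - autoNode W A B y‖ = ‖∑ j, (f y j - h j y) • EuclideanSpace.single j (1 : ℝ)‖ := by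
        rw [hWAB, Finset.sum_apply]
        nth_rw 1 [hfy]
        simp only [sub_smul, Finset.sum_sub_distrib]
    _ ≤ ∑ j : Fin d, δ / (d + 1) := by
        refine (norm_sum_le _ _).trans (Finset.sum_le_sum fun j _ => ?_)
        simpa [norm_smul] using (hfh j y hy).le
    _ < δ := by
        rw [Finset.sum_const, Finset.card_univ, Fintype.card_fin, nsmul_eq_mul, mul_div_assoc',
          div_lt_iff₀ (by positivity)]
        nlinarith

end AutoNodeFields

section Gronwall

variable {E : Type*} [NormedAddCommGroup E] [NormedSpace ℝ E] {v : E → E} {K : ℝ≥0}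
  {f g g' : ℝ → E} {a b : ℝ}

theorem norm_le_add_gronwallBound_of_trajectory (hv : LipschitzWith K v)
    (hf : ContinuousOn f (Icc a b)) (hf' : ∀ t ∈ Ico a b, HasDerivWithinAt f (v (f t)) (Ici t) t)
    {R M : ℝ} (hR : ‖f a‖ ≤ R) (hM : ‖v (f a)‖ ≤ M) :
    ∀ t ∈ Icc a b, ‖f t‖ ≤ R + gronwallBound 0 K M (b - a) := by
  have hdist := dist_le_of_approx_trajectories_ODE (εg := M) (fun _ => hv) hf hf'
    (fun _ _ => (dist_self _).le) continuousOn_const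
    (fun t _ => hasDerivWithinAt_const t _ (f a)) (fun _ _ => by rwa [dist_zero_left])
    (dist_self _).le
  intro t ht
  have hmono := gronwallBound_mono le_rfl ((norm_nonneg _).trans hM) K.coe_nonneg
    (sub_le_sub_right ht.2 a)
  calc ‖f t‖ ≤ ‖f a‖ + dist (f t) (f a) := by
        rw [dist_eq_norm]; exact norm_le_norm_add_norm_sub' _ _
    _ ≤ R + gronwallBound 0 K M (b - a) := by
        refine add_le_add hR ((hdist t ht).trans ?_)
        rwa [zero_add]

/-- At the first time `τ` where the distance reaches `r`, Grönwall on `[a, τ]` gives a distance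
below `r`. -/
theorem dist_lt_of_approx_trajectory_near (hv : LipschitzWith K v)
    (hf : ContinuousOn f (Icc a b)) (hf' : ∀ t ∈ Ico a b, HasDerivWithinAt f (v (f t)) (Ici t) t)
    (hg : ContinuousOn g (Icc a b)) (hg' : ∀ t ∈ Ico a b, HasDerivWithinAt g (g' t) (Ici t) t)
    {δ r : ℝ} (hδ : 0 ≤ δ)
    (hg'v : ∀ t ∈ Ico a b, dist (f t) (g t) < r → dist (g' t) (v (g t)) ≤ δ)
    (ha : f a = g a) (hr : gronwallBound 0 K δ (b - a) < r) :
    ∀ t ∈ Icc a b, dist (f t) (g t) < r := by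
  by_contra! hbad
  set S := Icc a b ∩ (fun t => dist (f t) (g t)) ⁻¹' Ici r
  have hS : IsCompact S := isCompact_Icc.of_isClosed_subset
    ((continuous_dist.comp_continuousOn (hf.prodMk hg)).preimage_isClosed_of_isClosed
      isClosed_Icc isClosed_Ici) inter_subset_left
  obtain ⟨τ, hτ, hτr⟩ := hbad
  have hτS : sInf S ∈ S := hS.sInf_mem ⟨τ, hτ, hτr⟩
  have hbefore : ∀ u ∈ Ico a (sInf S), dist (f u) (g u) < r := fun u hu =>
    not_le.1 fun h => (csInf_le hS.bddBelow ⟨⟨hu.1, hu.2.le.trans hτS.1.2⟩, h⟩).not_gt hu.2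
  have hsub : Icc a (sInf S) ⊆ Icc a b := Icc_subset_Icc_right hτS.1.2
  have hIco : ∀ u ∈ Ico a (sInf S), u ∈ Ico a b := fun u hu => ⟨hu.1, hu.2.trans_le hτS.1.2⟩
  have hgron := dist_le_of_approx_trajectories_ODE (v := fun _ => v) (fun _ => hv) (hf.mono hsub)
    (fun u hu => hf' u (hIco u hu)) (fun _ _ => (dist_self _).le) (hg.mono hsub)
    (fun u hu => hg' u (hIco u hu)) (fun u hu => hg'v u (hIco u hu) (hbefore u hu))
    (by rw [ha, dist_self]) _ (right_mem_Icc.2 hτS.1.1)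
  have hmono := gronwallBound_mono le_rfl hδ K.coe_nonneg (sub_le_sub_right hτS.1.2 a)
  rw [zero_add] at hgron
  exact (hτS.2.trans (hgron.trans hmono)).not_gt hr

theorem exists_pos_gronwallBound_lt (K x : ℝ) {r : ℝ} (hr : 0 < r) :
    ∃ δ > 0, gronwallBound 0 K δ x < r := by
  have hlim : Filter.Tendsto (fun δ => gronwallBound 0 K δ x) (𝓝[>] 0) (𝓝 0) := by
    simpa [gronwallBound_ε0_δ0] using
      ((gronwallBound_continuous_ε 0 K x).tendsto 0).mono_left nhdsWithin_le_nhds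
  exact ((hlim.eventually (gt_mem_nhds hr)).and self_mem_nhdsWithin).exists.imp
    fun δ h => ⟨h.2, h.1⟩

end Gronwall

theorem autonomous_node_universal_approximation_general
    (d : ℕ) (T : ℝ)
    (f : Euc d → Euc d)
    (L : ℝ)
    (hlip : ∀ x y : Euc d, ‖f x - f y‖ ≤ L * ‖x - y‖)
    (K : Set (Euc d)) (hK : IsCompact K)
    (ε : ℝ) (hε : 0 < ε) :
    ∃ (P : ℕ), 0 < P ∧
      ∃ (W : Fin P → Euc d) (A : Fin P → Matrix (Fin d) (Fin d) ℝ) (B : Fin P → Euc d),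
        ∀ z₀ ∈ K, ∀ z x : ℝ → Euc d,
          z 0 = z₀ → x 0 = z₀ →
          (∀ t ∈ Icc (0:ℝ) T, HasDerivAt z (f (z t)) t) →
          (∀ t ∈ Icc (0:ℝ) T, HasDerivAt x (autoNode W A B (x t)) t) →
          ∀ t ∈ Icc (0:ℝ) T, ‖z t - x t‖ ≤ ε := by
  have hf : LipschitzWith L.toNNReal f := LipschitzWith.of_dist_le_mul fun x y => by
    simpa only [dist_eq_norm] using (hlip x y).trans (by gcongr; exact L.le_coe_toNNReal)
  obtain ⟨R₀, hR₀⟩ := hK.exists_bound_of_continuousOn continuousOn_id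
  obtain ⟨M, hM⟩ := hK.exists_bound_of_continuousOn hf.continuous.continuousOn
  set R := R₀ + gronwallBound 0 L.toNNReal M (T - 0)
  obtain ⟨δ, hδ, hδr⟩ := exists_pos_gronwallBound_lt L.toNNReal (T - 0) (lt_min hε one_pos)
  obtain ⟨P, hP, W, A, B, hnode⟩ :=
    exists_autoNode_near hf.continuous (isCompact_closedBall 0 (R + 1)) hδ
  refine ⟨P, hP, W, A, B, fun z₀ hz₀ z x hz0 hx0 hz hx t ht => ?_⟩
  have hz' : ∀ t ∈ Ico 0 T, HasDerivWithinAt z (f (z t)) (Ici t) t := fun t ht =>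
    (hz t (Ico_subset_Icc_self ht)).hasDerivWithinAt
  have hx' : ∀ t ∈ Ico 0 T, HasDerivWithinAt x (autoNode W A B (x t)) (Ici t) t := fun t ht =>
    (hx t (Ico_subset_Icc_self ht)).hasDerivWithinAt
  have hzc : ContinuousOn z (Icc 0 T) := fun t ht => (hz t ht).continuousAt.continuousWithinAt
  have hxc : ContinuousOn x (Icc 0 T) := fun t ht => (hx t ht).continuousAt.continuousWithinAt
  have hzR := norm_le_add_gronwallBound_of_trajectory hf hzc hz'
    (hz0 ▸ hR₀ z₀ hz₀) (hz0 ▸ hM z₀ hz₀)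
  have hclose := dist_lt_of_approx_trajectory_near (r := min ε 1) hf hzc hz' hxc hx' hδ.le
    (fun t ht hzx => by
      rw [dist_comm, dist_eq_norm]
      refine (hnode _ (mem_closedBall_zero_iff.2 ?_)).le
      calc ‖x t‖ ≤ ‖z t‖ + dist (z t) (x t) := by
            rw [dist_comm, dist_eq_norm]; exact norm_le_norm_add_norm_sub' _ _
        _ ≤ R + 1 := add_le_add (hzR t (Ico_subset_Icc_self ht)) (hzx.le.trans (min_le_right _ _)))
    (hz0.trans hx0.symm) hδr t ht
  rw [← dist_eq_norm]
  exact hclose.le.trans (min_le_left _ _)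

/-- Remark 2.8, autonomous universal approximation: for `f : ℝ^d → ℝ^d`
globally `L`-Lipschitz, any compact set `K` of initial data and any `ε > 0`, there is an
autonomous neural ODE whose trajectories uniformly `ε`-approximate those of `ż = f(z)` on
`[0,T]`. -/
theorem autonomous_node_universal_approximation
    (d : ℕ) (T : ℝ) (hT : 0 < T)
    (f : Euc d → Euc d)
    (L : ℝ) (hL : 0 < L)
    (hlip : ∀ x y : Euc d, ‖f x - f y‖ ≤ L * ‖x - y‖)
    (K : Set (Euc d)) (hK : IsCompact K)
    (ε : ℝ) (hε : 0 < ε) :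
    ∃ (P : ℕ), 0 < P ∧
      ∃ (W : Fin P → Euc d) (A : Fin P → Matrix (Fin d) (Fin d) ℝ) (B : Fin P → Euc d),
        ∀ z₀ ∈ K, ∀ z x : ℝ → Euc d,
          z 0 = z₀ → x 0 = z₀ →
          (∀ t ∈ Icc (0:ℝ) T, HasDerivAt z (f (z t)) t) →
          (∀ t ∈ Icc (0:ℝ) T, HasDerivAt x (autoNode W A B (x t)) t) →
          ∀ t ∈ Icc (0:ℝ) T, ‖z t - x t‖ ≤ ε :=
  autonomous_node_universal_approximation_general d T f L hlip K hK ε hε
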